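/- Let (R, m, k) be a Gorenstein local ring with m³ = 0 and edim R = 3 that is not a complete intersection, and let I be a nonzero proper ideal of R. Then ℓ(R) = 5, m² ⊆ I, and if mI ≠ 0 then ν(I) = ℓ(I) − 1. -/

import Mathlib

open IsLocalRing

/-- The length of a module, defined as the Krull dimension of its submodule lattice. -/
noncomputable def mlen (R M : Type*) [CommRing R] [AddCommGroup M] [Module R M] : ℕ∞ :=
  WithBot.unbotD 0 (Order.krullDim (Submodule R M))

/-- The length of the subquotient `A/B` of the ring, for ideals `A`, `B` (used with `B ≤ A`). -/
noncomputable def qlen {R : Type*} [CommRing R] (A B : Ideal R) : ℕ∞ :=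
  mlen R (↥A ⧸ Submodule.comap (Submodule.subtype A) B)

/-- A regular local ring: a Noetherian local ring whose maximal ideal can be generated by
`Krull dimension` many elements. -/
def IsRegularLocal (S : Type*) [CommRing S] [IsLocalRing S] : Prop :=
  IsNoetherianRing S ∧ ∃ s : Finset S, Ideal.span (s : Set S) = maximalIdeal S ∧
    (s.card : WithBot ℕ∞) = ringKrullDim S

universe u

/-- A witness that a local ring is a complete intersection: an isomorphism with a quotient of
a regular local ring by (the ideal generated by) a regular sequence. -/
structure CompleteIntersectionWitness (R : Type u) [CommRing R] : Type (u + 1) where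
  S : Type u
  [commRing : CommRing S]
  [isLocalRing : IsLocalRing S]
  regular : IsRegularLocal S
  seq : List S
  seq_regular : RingTheory.Sequence.IsRegular S seq
  iso : Nonempty (R ≃+* S ⧸ Ideal.span {a | a ∈ seq})

attribute [instance] CompleteIntersectionWitness.commRing
  CompleteIntersectionWitness.isLocalRing

/-- A (complete, e.g. artinian) local ring is a complete intersection if it is isomorphic to
a regular local ring modulo a regular sequence. -/
def IsCompleteIntersection (R : Type u) [CommRing R] : Prop :=
  Nonempty (CompleteIntersectionWitness R)

/-! ### Auxiliary length theory -/

/-- The "dimension" of a preorder: Krull dimension, with `⊥` sent to `0`. -/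
noncomputable def dimOf (α : Type*) [Preorder α] : ℕ∞ := WithBot.unbotD 0 (Order.krullDim α)

section OrderAux

variable {α : Type*}

lemma length_le_dimOf [Preorder α] (p : LTSeries α) : (p.length : ℕ∞) ≤ dimOf α := by
  have : Nonempty α := ⟨p.head⟩
  rw [dimOf, Order.krullDim_eq_iSup_length, WithBot.unbotD_coe]
  exact le_iSup (fun p : LTSeries α => (p.length : ℕ∞)) p

lemma dimOf_le [Preorder α] {n : ℕ∞} (h : ∀ p : LTSeries α, (p.length : ℕ∞) ≤ n) :
    dimOf α ≤ n := by
  rcases isEmpty_or_nonempty α with hE | hN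
  · rw [dimOf, Order.krullDim_eq_bot]; simp
  · rw [dimOf, Order.krullDim_eq_iSup_length, WithBot.unbotD_coe]; exact iSup_le h

lemma dimOf_eq_iSup [Preorder α] [Nonempty α] :
    dimOf α = ⨆ p : LTSeries α, (p.length : ℕ∞) := by
  rw [dimOf, Order.krullDim_eq_iSup_length, WithBot.unbotD_coe]

lemma dimOf_congr {β : Type*} [Preorder α] [Preorder β] (e : α ≃o β) : dimOf α = dimOf β := by
  rw [dimOf, dimOf, Order.krullDim_eq_of_orderIso e]

/-- Splitting a chain in a modular lattice along an element `a`. -/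
lemma exists_split [Lattice α] [IsModularLattice α] (a : α) :
    ∀ (n : ℕ) (p : LTSeries α), p.length = n →
    ∃ (q : LTSeries {b : α // b ≤ a}) (r : LTSeries {b : α // a ≤ b}),
      q.last = ⟨p.last ⊓ a, inf_le_right⟩ ∧ r.last = ⟨p.last ⊔ a, le_sup_right⟩ ∧
      p.length ≤ q.length + r.length := by
  intro n
  induction n with
  | zero =>
    intro p hp
    exact ⟨RelSeries.singleton _ ⟨p.last ⊓ a, inf_le_right⟩,
      RelSeries.singleton _ ⟨p.last ⊔ a, le_sup_right⟩, rfl, rfl, by simp [hp]⟩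
  | succ n ih =>
    intro p hp
    obtain ⟨q, r, hq, hr, hlen⟩ := ih p.eraseLast (by simp [hp])
    have hxy : p.eraseLast.last < p.last := p.eraseLast_last_rel_last (by omega)
    set x := p.eraseLast.last with hx
    set y := p.last with hy
    have hlen' : p.eraseLast.length = n := by simp [hp]
    have hinfle : x ⊓ a ≤ y ⊓ a := inf_le_inf_right a hxy.le
    have hsuple : x ⊔ a ≤ y ⊔ a := sup_le_sup_right hxy.le a
    by_cases h1 : x ⊓ a = y ⊓ a
    · have h2 : x ⊔ a < y ⊔ a := by
        refine lt_of_le_of_ne hsuple fun he => hxy.ne ?_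
        exact eq_of_le_of_inf_le_of_sup_le hxy.le h1.ge he.ge
      refine ⟨q, r.snoc ⟨y ⊔ a, le_sup_right⟩ (by rw [hr]; exact h2),
        ?_, ?_, ?_⟩
      · rw [hq]; exact Subtype.ext h1
      · simp
      · simp only [RelSeries.snoc_length]; omega
    · have h1' : x ⊓ a < y ⊓ a := lt_of_le_of_ne hinfle h1
      by_cases h2 : x ⊔ a = y ⊔ a
      · refine ⟨q.snoc ⟨y ⊓ a, inf_le_right⟩ (by rw [hq]; exact h1'), r,
          ?_, ?_, ?_⟩
        · simp
        · rw [hr]; exact Subtype.ext h2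
        · simp only [RelSeries.snoc_length]; omega
      · have h2' : x ⊔ a < y ⊔ a := lt_of_le_of_ne hsuple h2
        refine ⟨q.snoc ⟨y ⊓ a, inf_le_right⟩ (by rw [hq]; exact h1'),
          r.snoc ⟨y ⊔ a, le_sup_right⟩ (by rw [hr]; exact h2'), ?_, ?_, ?_⟩
        · simp
        · simp
        · simp only [RelSeries.snoc_length]; omega

/-- Dimension additivity along an element of a modular lattice. -/
lemma dimOf_inf_add_sup [Lattice α] [IsModularLattice α] (a : α) :
    dimOf α = dimOf {b : α // b ≤ a} + dimOf {b : α // a ≤ b} := by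
  apply le_antisymm
  · apply dimOf_le; intro p
    obtain ⟨q, r, -, -, h⟩ := exists_split a p.length p rfl
    calc (p.length : ℕ∞) ≤ ((q.length + r.length : ℕ) : ℕ∞) := by exact_mod_cast h
      _ = (q.length : ℕ∞) + (r.length : ℕ∞) := by push_cast; rfl
      _ ≤ _ := add_le_add (length_le_dimOf q) (length_le_dimOf r)
  · have h1 : Nonempty {b : α // b ≤ a} := ⟨⟨a, le_rfl⟩⟩
    have h2 : Nonempty {b : α // a ≤ b} := ⟨⟨a, le_rfl⟩⟩
    have h3 : Nonempty (LTSeries {b : α // b ≤ a}) := ⟨RelSeries.singleton _ ⟨a, le_rfl⟩⟩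
    have h4 : Nonempty (LTSeries {b : α // a ≤ b}) := ⟨RelSeries.singleton _ ⟨a, le_rfl⟩⟩
    rw [dimOf_eq_iSup (α := {b : α // b ≤ a}), dimOf_eq_iSup (α := {b : α // a ≤ b})]
    apply ENat.iSup_add_iSup_le
    intro q r
    have hq : StrictMono (Subtype.val : {b : α // b ≤ a} → α) := fun _ _ h => h
    have hr : StrictMono (Subtype.val : {b : α // a ≤ b} → α) := fun _ _ h => h
    set q' := q.map Subtype.val hq with hq'
    set r' := r.map Subtype.val hr with hr'
    have hle : q'.last ≤ r'.head := by
      calc q'.last = (q.last : α) := by simp [hq']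
        _ ≤ a := q.last.2
        _ ≤ (r.head : α) := r.head.2
        _ = r'.head := by simp [hr']
    rcases eq_or_lt_of_le hle with heq | hlt
    · have := length_le_dimOf (q'.smash r' heq)
      simp only [RelSeries.smash_length] at this
      calc (q.length : ℕ∞) + r.length = ((q'.length + r'.length : ℕ) : ℕ∞) := by
            push_cast; simp [hq', hr']
        _ ≤ _ := this
    · have := length_le_dimOf (q'.append r' hlt)
      simp only [RelSeries.append_length] at this
      refine le_trans ?_ this
      calc (q.length : ℕ∞) + r.length = ((q'.length + r'.length : ℕ) : ℕ∞) := by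
            push_cast; simp [hq', hr']
        _ ≤ ((q'.length + r'.length + 1 : ℕ) : ℕ∞) := by exact_mod_cast Nat.le_succ _

end OrderAux

section ModuleAux

variable {R M N : Type*} [CommRing R] [AddCommGroup M] [Module R M] [AddCommGroup N] [Module R N]

lemma mlen_def' : mlen R M = dimOf (Submodule R M) := rfl

lemma mlen_congr (e : M ≃ₗ[R] N) : mlen R M = mlen R N :=
  dimOf_congr (Submodule.orderIsoMapComap e)

lemma mlen_eq_add (P : Submodule R M) : mlen R M = mlen R ↥P + mlen R (M ⧸ P) := by
  rw [mlen_def', mlen_def', mlen_def',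
    dimOf_congr (Submodule.MapSubtype.orderIso P),
    dimOf_congr (Submodule.comapMkQRelIso P)]
  exact dimOf_inf_add_sup P

lemma mlen_zero_of_subsingleton [Subsingleton M] : mlen R M = 0 := by
  have h1 : Subsingleton (Submodule R M) := (Submodule.subsingleton_iff R).mpr ‹_›
  have h2 := Order.krullDim_nonpos_of_subsingleton (α := Submodule R M)
  have h3 := Order.krullDim_nonneg (α := Submodule R M)
  rw [mlen, le_antisymm h2 h3]; rfl

lemma mlen_one_of_simple [IsSimpleModule R M] : mlen R M = 1 := by
  rw [mlen_def']
  apply le_antisymm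
  · apply dimOf_le; intro p
    by_contra h
    push_neg at h
    have h2 : 2 ≤ p.length := by
      rcases p with ⟨n, f, hf⟩
      simp only [Nat.one_lt_cast] at h
      exact (by simpa using h : 1 < n)
    have l01 : p.toFun ⟨0, by omega⟩ < p.toFun ⟨1, by omega⟩ := p.strictMono (by simp [Fin.lt_def])
    have l12 : p.toFun ⟨1, by omega⟩ < p.toFun ⟨2, by omega⟩ := p.strictMono (by simp [Fin.lt_def])
    rcases eq_bot_or_eq_top (p.toFun ⟨1, by omega⟩) with hb | ht
    · rw [hb] at l01; exact not_lt_bot l01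
    · rw [ht] at l12; exact not_top_lt l12
  · have hbt : (⊥ : Submodule R M) < ⊤ := bot_lt_top
    have := length_le_dimOf ((RelSeries.singleton _ (⊥ : Submodule R M)).snoc ⊤ hbt)
    change ((0 + 0 + 1 : ℕ) : ℕ∞) ≤ _ at this
    simpa using this

end ModuleAux

lemma ideal_len {R : Type*} [CommRing R] {B A : Ideal R} (h : B ≤ A) :
    mlen R ↥A = mlen R ↥B + qlen A B := by
  rw [qlen, ← mlen_congr (Submodule.comapSubtypeEquivOfLe h)]
  exact mlen_eq_add _

theorem ideal_structure_in_length_five_gorenstein {R : Type u} [CommRing R]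
    [IsNoetherianRing R] [IsLocalRing R]
    (hGor : mlen R ↥(Submodule.colon (⊥ : Ideal R) (maximalIdeal R)) = 1)
    (hm3 : (maximalIdeal R) ^ 3 = ⊥)
    (hedim : qlen (maximalIdeal R) ((maximalIdeal R) ^ 2) = 3)
    (hnotCI : ¬ IsCompleteIntersection R)
    (I : Ideal R) (hI0 : I ≠ ⊥) (hItop : I ≠ ⊤) :
    mlen R R = 5 ∧ (maximalIdeal R) ^ 2 ≤ I ∧
    (maximalIdeal R * I ≠ ⊥ → qlen I (maximalIdeal R * I) + 1 = mlen R ↥I) := by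
  set S := Submodule.colon (⊥ : Ideal R) (maximalIdeal R) with hSdef
  have hmemS : ∀ x : R, x ∈ S ↔ ∀ c ∈ maximalIdeal R, c * x = 0 := by
    intro x
    simp only [hSdef, Submodule.mem_colon, Submodule.mem_bot, smul_eq_mul]
    exact forall₂_congr fun c _ => by rw [mul_comm]
  -- every ideal below S is ⊥ or S
  have hSsimple : ∀ J : Ideal R, J ≤ S → J = ⊥ ∨ J = S := by
    intro J hJle
    by_contra hc
    push_neg at hc
    have hdim : dimOf {b : Ideal R // b ≤ S} = 1 := by
      rw [← dimOf_congr (Submodule.MapSubtype.orderIso S)]; exact hGor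
    have c0 : (⟨⊥, bot_le⟩ : {b : Ideal R // b ≤ S}) < ⟨J, hJle⟩ :=
      Subtype.mk_lt_mk.mpr (bot_lt_iff_ne_bot.mpr hc.1)
    have c1 : (⟨J, hJle⟩ : {b : Ideal R // b ≤ S}) < ⟨S, le_rfl⟩ :=
      Subtype.mk_lt_mk.mpr (lt_of_le_of_ne hJle hc.2)
    have := length_le_dimOf (((RelSeries.singleton _ (⟨⊥, bot_le⟩ : {b : Ideal R // b ≤ S})).snoc ⟨J, hJle⟩ c0).snoc
      ⟨S, le_rfl⟩ (by simp only [RelSeries.last_snoc]; exact c1))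
    rw [hdim] at this
    simp only [RelSeries.snoc_length, RelSeries.singleton_length] at this
    change ((0 + 0 + 1 : ℕ) : ℕ∞) + 1 ≤ 1 at this
    norm_num at this
  have hm2m : maximalIdeal R ^ 2 ≤ maximalIdeal R := Ideal.pow_le_self two_ne_zero
  have hm2S : maximalIdeal R ^ 2 ≤ S := by
    intro x hx
    rw [hmemS]
    intro c hc
    have h1 : c * x ∈ maximalIdeal R * maximalIdeal R ^ 2 := Ideal.mul_mem_mul hc hx
    have h3 : maximalIdeal R * maximalIdeal R ^ 2 = maximalIdeal R ^ 3 := by ring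
    rw [h3, hm3] at h1
    simpa using h1
  have hbotsub : Subsingleton ↥(⊥ : Ideal R) := Submodule.subsingleton_iff_eq_bot.mpr rfl
  have hqm : mlen R ↥(maximalIdeal R) = mlen R ↥(maximalIdeal R ^ 2) + 3 := by
    rw [ideal_len hm2m, hedim]
  have hm2ne : maximalIdeal R ^ 2 ≠ ⊥ := by
    intro h
    have hz : mlen R ↥(maximalIdeal R ^ 2) = 0 := by
      rw [h]; exact @mlen_zero_of_subsingleton _ _ _ _ _ hbotsub
    rw [hz, zero_add] at hqm
    have hmS : maximalIdeal R ≤ S := by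
      intro x hx
      rw [hmemS]
      intro c hc
      have h1 : c * x ∈ maximalIdeal R * maximalIdeal R := Ideal.mul_mem_mul hc hx
      rw [← pow_two, h] at h1
      simpa using h1
    rcases hSsimple _ hmS with hmb | hms
    · rw [hmb] at hqm
      rw [@mlen_zero_of_subsingleton _ _ _ _ _ hbotsub] at hqm
      norm_num at hqm
    · rw [hms, hGor] at hqm
      norm_num at hqm
  have hm2eqS : maximalIdeal R ^ 2 = S := (hSsimple _ hm2S).resolve_left hm2ne
  have hm2len : mlen R ↥(maximalIdeal R ^ 2) = 1 := by rw [hm2eqS]; exact hGor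
  have hmlen : mlen R ↥(maximalIdeal R) = 4 := by rw [hqm, hm2len]; rfl
  have hsimpleq : IsSimpleModule R (R ⧸ (maximalIdeal R : Submodule R R)) :=
    isSimpleModule_iff_isCoatom.mpr ((Ideal.isMaximal_def).mp (maximalIdeal.isMaximal R))
  have hlen5 : mlen R R = 5 := by
    rw [mlen_eq_add (maximalIdeal R : Submodule R R), hmlen,
      @mlen_one_of_simple _ _ _ _ _ hsimpleq]
    rfl
  have hIm : I ≤ maximalIdeal R := le_maximalIdeal hItop
  obtain ⟨x, hxI, hx0⟩ := Submodule.exists_mem_ne_zero_of_ne_bot hI0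
  have hspan : Ideal.span {x} ≤ I := by rwa [Ideal.span_le, Set.singleton_subset_iff]
  have hspanm : Ideal.span {x} ≤ maximalIdeal R := hspan.trans hIm
  have hKS : maximalIdeal R * Ideal.span {x} ≤ S := by
    intro y hy
    rw [hmemS]
    intro c hc
    have h1 : c * y ∈ maximalIdeal R * (maximalIdeal R * Ideal.span {x}) :=
      Ideal.mul_mem_mul hc hy
    have h2 : maximalIdeal R * (maximalIdeal R * Ideal.span {x}) ≤ maximalIdeal R ^ 3 := by
      calc maximalIdeal R * (maximalIdeal R * Ideal.span {x})
          ≤ maximalIdeal R * (maximalIdeal R * maximalIdeal R) :=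
            Ideal.mul_mono_right (Ideal.mul_mono_right hspanm)
        _ = maximalIdeal R ^ 3 := by ring
    have h4 := h2 h1
    rw [hm3] at h4
    simpa using h4
  have hm2I : maximalIdeal R ^ 2 ≤ I := by
    rcases hSsimple _ hKS with hK | hK
    · have hsS : Ideal.span {x} ≤ S := by
        intro z hz
        rw [hmemS]
        intro c hc
        have h1 : c * z ∈ maximalIdeal R * Ideal.span {x} := Ideal.mul_mem_mul hc hz
        rw [hK] at h1
        simpa using h1
      have hxS : Ideal.span {x} = S := (hSsimple _ hsS).resolve_left
        (by simpa [Ideal.span_singleton_eq_bot] using hx0)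
      rw [hm2eqS, ← hxS]
      exact hspan
    · rw [hm2eqS, ← hK]
      calc maximalIdeal R * Ideal.span {x} ≤ maximalIdeal R * I := Ideal.mul_mono_right hspan
        _ ≤ I := Ideal.mul_le_right
  refine ⟨hlen5, hm2I, ?_⟩
  intro hmI
  have h1 : maximalIdeal R * I ≤ S := by
    refine le_trans ?_ hm2S
    calc maximalIdeal R * I ≤ maximalIdeal R * maximalIdeal R := Ideal.mul_mono_right hIm
      _ = maximalIdeal R ^ 2 := (pow_two _).symm
  have heq : maximalIdeal R * I = maximalIdeal R ^ 2 := by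
    rw [hm2eqS]
    exact (hSsimple _ h1).resolve_left hmI
  have hml : maximalIdeal R * I ≤ I := Ideal.mul_le_right
  rw [ideal_len hml, heq, hm2len, add_comm]
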